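/- arXiv:2108.12766 — 5 statements merged into one kernel-verified Lean document; each statement's English description precedes it below -/
import Mathlib

section
/- Let n be a nonnegative integer and let λ be a partition of 2n (i.e., |λ| = 2n). Then the Young diagram of λ can be tiled by dominoes if and only if λ has exactly n even hook lengths and exactly n odd hook lengths, counted with multiplicity; equivalently, a partition has empty 2-core if and only if its number of even hook lengths equals its number of odd hook lengths. -/
/-- A partition `λ`, 1-indexed: `λ_i = part i` for `i ≥ 1`. -/
structure OneIdxPartition where
  part : ℕ → ℕ
  part_zero : part 0 = 0
  antitone : ∀ ⦃i j : ℕ⦄, 1 ≤ i → i ≤ j → part j ≤ part i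
  finite : ∃ N : ℕ, ∀ i : ℕ, N ≤ i → part i = 0

/-- The conjugate partition: `λ'_j = #{i ≥ 1 : λ_i ≥ j}`. -/
noncomputable def conjFn (f : ℕ → ℕ) (j : ℕ) : ℕ :=
  Set.ncard {i : ℕ | 1 ≤ i ∧ j ≤ f i}

/-- The cells of the Young diagram of `λ`. -/
def cellsFn (f : ℕ → ℕ) : Set (ℕ × ℕ) :=
  {p : ℕ × ℕ | 1 ≤ p.1 ∧ 1 ≤ p.2 ∧ p.2 ≤ f p.1}

/-- The hook length of the cell `(i,j)`: `h(i,j) = (λ_i − j) + (λ'_j − i) + 1`. -/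
noncomputable def hookFn (f : ℕ → ℕ) (i j : ℕ) : ℕ :=
  (f i - j) + (conjFn f j - i) + 1

/-- `b(λ) = Σ_{(i,j)∈λ} (−1)^{λ_i + λ'_j − i − j + 1}(λ_i − i)`;
the exponent is replaced by `λ_i + λ'_j + i + j + 1`, which has the same parity. -/
noncomputable def bFn (f : ℕ → ℕ) : ℤ :=
  ∑ᶠ i : ℕ, ∑ j ∈ Finset.Icc 1 (f i),
    (-1 : ℤ) ^ (f i + conjFn f j + i + j + 1) * ((f i : ℤ) - (i : ℤ))

/-- The size `|λ| = Σ_i λ_i`. -/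
noncomputable def sizeFn (f : ℕ → ℕ) : ℕ := ∑ᶠ i : ℕ, f i

/-- A domino: a pair of horizontally or vertically adjacent cells. -/
def IsDomino (d : Set (ℕ × ℕ)) : Prop :=
  ∃ i j : ℕ, d = {(i, j), (i, j + 1)} ∨ d = {(i, j), (i + 1, j)}

/-- The Young diagram of `λ` can be tiled by dominoes. -/
def HasDominoTiling (f : ℕ → ℕ) : Prop :=
  ∃ D : Set (Set (ℕ × ℕ)), (∀ d ∈ D, IsDomino d) ∧
    D.PairwiseDisjoint id ∧ ⋃₀ D = cellsFn f

/-!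
Put the rows of `λ` in a window of `N` rows, `N` even, and encode `λ` by its beta-set
`B = {λ_i + N - i}`. The hooks of row `i` correspond to the gaps `c ∉ B` below `b = λ_i + N - i`,
with hook length `b - c`; hence, with `s = ∑_{b ∈ B} (-1)^b`, the signed hook count
`∑ (-1)^h` equals `(s - s²)/2`. The checkerboard count of the cells equals `s/2`.
A domino tiling forces the checkerboard count, hence `s`, hence the signed hook count to vanish.
Conversely equal numbers of even and odd hooks give `s ∈ {0, 1}`, and `s = 1` is excluded since
`s` is even. Finally a nonempty partition with zero checkerboard count always has a removable
domino, since partitions without one are staircases, whose checkerboard count is nonzero.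
-/

open Finset

lemma neg_one_pow_sq (a : ℕ) : ((-1 : ℤ) ^ a) ^ 2 = 1 := by
  rw [← pow_mul, mul_comm, pow_mul, neg_one_sq, one_pow]

lemma two_mul_sum_Icc_neg_one_pow (m : ℕ) :
    2 * ∑ j ∈ Icc 1 m, (-1 : ℤ) ^ j = (-1) ^ m - 1 := by
  induction m with
  | zero => simp
  | succ m ih => rw [sum_Icc_succ_top (by omega), mul_add, ih, pow_succ]; ring

lemma sum_Icc_neg_one_pow_of_even {N : ℕ} (hN : Even N) : ∑ i ∈ Icc 1 N, (-1 : ℤ) ^ i = 0 := by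
  have h := two_mul_sum_Icc_neg_one_pow N
  rw [hN.neg_one_pow, sub_self] at h
  omega

lemma two_mul_sum_range_neg_one_pow_add (b : ℕ) :
    2 * ∑ c ∈ range b, (-1 : ℤ) ^ (b + c) = (-1) ^ b - 1 := by
  simp_rw [pow_add, ← mul_sum, neg_one_geom_sum]
  rcases Nat.even_or_odd b with hb | hb
  · simp [hb, hb.neg_one_pow]
  · simp [Nat.not_even_iff_odd.2 hb, hb.neg_one_pow]

theorem two_mul_sum_sum_range_sdiff_neg_one_pow (B : Finset ℕ) :
    2 * ∑ b ∈ B, ∑ c ∈ range b \ B, (-1 : ℤ) ^ (b + c)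
      = ∑ b ∈ B, (-1 : ℤ) ^ b - (∑ b ∈ B, (-1 : ℤ) ^ b) ^ 2 := by
  induction B using Finset.induction_on_max with
  | empty => simp
  | insert a s hlt ih =>
    have ha : a ∉ s := fun h => (hlt a h).false
    have hbelow : ∑ b ∈ s, ∑ c ∈ range b \ insert a s, (-1 : ℤ) ^ (b + c)
        = ∑ b ∈ s, ∑ c ∈ range b \ s, (-1 : ℤ) ^ (b + c) :=
      sum_congr rfl fun b hb => by rw [sdiff_insert_of_notMem (by simpa using (hlt b hb).le)]
    have htop : ∑ c ∈ range a \ insert a s, (-1 : ℤ) ^ (a + c)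
        = ∑ c ∈ range a, (-1 : ℤ) ^ (a + c) - (-1) ^ a * ∑ c ∈ s, (-1 : ℤ) ^ c := by
      rw [sdiff_insert_of_notMem (by simp), sum_sdiff_eq_sub fun x hx => mem_range.2 (hlt x hx),
        mul_sum]
      simp_rw [pow_add]
    rw [sum_insert ha, sum_insert ha, hbelow, mul_add, htop, mul_sub,
      two_mul_sum_range_neg_one_pow_add]
    linear_combination ih + neg_one_pow_sq a

lemma finsum_mem_neg_one_pow {α : Type*} {S : Set α} (hS : S.Finite) (h : α → ℕ) :
    ∑ᶠ p ∈ S, (-1 : ℤ) ^ h p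
      = ({p | p ∈ S ∧ Even (h p)}.ncard : ℤ) - {p | p ∈ S ∧ Odd (h p)}.ncard := by
  classical
  have hsep : ∀ (P : α → Prop) [DecidablePred P],
      {p | p ∈ S ∧ P p} = ↑(hS.toFinset.filter P) := by
    intro P _; ext; simp
  have hsum : ∑ᶠ p ∈ S, (-1 : ℤ) ^ h p = ∑ p ∈ hS.toFinset, (-1 : ℤ) ^ h p := by
    rw [← finsum_mem_coe_finset, hS.coe_toFinset]
  rw [hsum, hsep, hsep, Set.ncard_coe_finset, Set.ncard_coe_finset, ← sum_boole, ← sum_boole,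
    ← sum_sub_distrib]
  refine sum_congr rfl fun p _ => ?_
  rcases Nat.even_or_odd (h p) with he | ho
  · simp [he, he.neg_one_pow, Nat.not_odd_iff_even.2 he]
  · simp [ho, ho.neg_one_pow, Nat.not_even_iff_odd.2 ho]

lemma ncard_sep_even_add_ncard_sep_odd {α : Type*} {S : Set α} (hS : S.Finite) (h : α → ℕ) :
    {p | p ∈ S ∧ Even (h p)}.ncard + {p | p ∈ S ∧ Odd (h p)}.ncard = S.ncard := by
  rw [← Set.ncard_union_eq (Set.disjoint_left.2 fun p he ho => Nat.not_even_iff_odd.2 ho.2 he.2)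
    (hS.subset fun _ hp => hp.1) (hS.subset fun _ hp => hp.1)]
  congr 1
  ext p
  simp only [Set.mem_union, Set.mem_ofPred_eq, ← and_or_left, Nat.even_or_odd, and_true]

noncomputable def checkerSum (S : Set (ℕ × ℕ)) : ℤ := ∑ᶠ p ∈ S, (-1) ^ (p.1 + p.2)

lemma IsDomino.finite {d : Set (ℕ × ℕ)} (hd : IsDomino d) : d.Finite := by
  obtain ⟨i, j, rfl | rfl⟩ := hd <;> exact Set.toFinite _

lemma IsDomino.ncard_eq_two {d : Set (ℕ × ℕ)} (hd : IsDomino d) : d.ncard = 2 := by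
  obtain ⟨i, j, rfl | rfl⟩ := hd <;> exact Set.ncard_pair (by simp)

lemma IsDomino.checkerSum_eq_zero {d : Set (ℕ × ℕ)} (hd : IsDomino d) : checkerSum d = 0 := by
  obtain ⟨i, j, rfl | rfl⟩ := hd <;> rw [checkerSum, finsum_mem_pair (by simp)]
  · rw [← add_assoc, pow_succ]; ring
  · rw [add_right_comm, pow_succ]; ring

lemma HasDominoTiling.checkerSum_eq_zero {f : ℕ → ℕ} (h : HasDominoTiling f)
    (hfin : (cellsFn f).Finite) : checkerSum (cellsFn f) = 0 := by
  obtain ⟨D, hD, hpd, hU⟩ := h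
  rw [← hU] at hfin ⊢
  have hDfin : D.Finite := hfin.finite_subsets.subset fun d hd => Set.subset_sUnion_of_mem hd
  rw [checkerSum, finsum_mem_sUnion hpd hDfin fun d hd => (hD d hd).finite]
  exact finsum_mem_eq_zero_of_forall_eq_zero fun d hd => (hD d hd).checkerSum_eq_zero

def beta (N : ℕ) (f : ℕ → ℕ) (i : ℕ) : ℕ := f i + (N - i)

def betaSet (N : ℕ) (f : ℕ → ℕ) : Finset ℕ := (Icc 1 N).image (beta N f)

/-- On the abacus whose beads `beta N f i` are the vertical steps of the boundary of `f`, the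
position of the horizontal step of column `j`. -/
noncomputable def gap (N : ℕ) (f : ℕ → ℕ) (j : ℕ) : ℕ := N + j - (1 + conjFn f j)

/-- For even `N`, this is the signed count `∑ b ∈ betaSet N f, (-1) ^ b` of the beta-set. -/
def charge (N : ℕ) (f : ℕ → ℕ) : ℤ := ∑ i ∈ Icc 1 N, (-1) ^ (f i + i)

namespace OneIdxPartition

variable (μ : OneIdxPartition) {N : ℕ}

lemma exists_even_bound : ∃ N, Even N ∧ ∀ i, N ≤ i → μ.part i = 0 := by
  obtain ⟨N, hN⟩ := μ.finite
  exact ⟨2 * N, even_two_mul N, fun i hi => hN i (by omega)⟩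

lemma cellsFn_finite : (cellsFn μ.part).Finite := by
  obtain ⟨N, -, hN⟩ := μ.exists_even_bound
  refine (Set.finite_Icc (1, 1) (N, μ.part 1)).subset fun p ⟨h1, h2, h3⟩ => ?_
  have hN' : p.1 ≤ N := by
    by_contra h
    have := hN p.1 (by omega)
    omega
  have := μ.antitone le_rfl h1
  exact ⟨⟨h1, h2⟩, hN', by omega⟩

lemma finsum_mem_cellsFn {M : Type*} [AddCommMonoid M] (hN : ∀ i, N ≤ i → μ.part i = 0)
    (g : ℕ × ℕ → M) :
    ∑ᶠ p ∈ cellsFn μ.part, g p = ∑ i ∈ Icc 1 N, ∑ j ∈ Icc 1 (μ.part i), g (i, j) := by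
  rw [← μ.cellsFn_finite.coe_toFinset, finsum_mem_coe_finset]
  refine sum_finset_product _ _ _ fun p => ?_
  simp only [Set.Finite.mem_toFinset, cellsFn, Set.mem_ofPred_eq, mem_Icc]
  constructor
  · rintro ⟨h1, h2, h3⟩
    refine ⟨⟨h1, ?_⟩, h2, h3⟩
    by_contra h
    have := hN p.1 (by omega)
    omega
  · rintro ⟨⟨h1, -⟩, h2, h3⟩
    exact ⟨h1, h2, h3⟩

lemma ncard_cellsFn : (cellsFn μ.part).ncard = sizeFn μ.part := by
  obtain ⟨N, -, hN⟩ := μ.exists_even_bound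
  have hsupp : Function.support μ.part ⊆ ↑(Icc 1 N) := by
    intro i hi
    have h0 : i ≠ 0 := by rintro rfl; exact hi μ.part_zero
    have hiN : i < N := by by_contra h; exact hi (hN i (by omega))
    simp only [coe_Icc, Set.mem_Icc]
    omega
  rw [Set.ncard_eq_toFinset_card _ μ.cellsFn_finite, card_eq_sum_ones, ← finsum_mem_coe_finset,
    Set.Finite.coe_toFinset, μ.finsum_mem_cellsFn hN, sizeFn,
    finsum_eq_sum_of_support_subset _ hsupp]
  simp

lemma le_part_iff_le_conjFn (hN : ∀ i, N ≤ i → μ.part i = 0) {i j : ℕ} (hi : 1 ≤ i)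
    (hj : 1 ≤ j) : j ≤ μ.part i ↔ i ≤ conjFn μ.part j := by
  have hfin : {k | 1 ≤ k ∧ j ≤ μ.part k}.Finite := by
    refine (Set.finite_Icc 1 N).subset fun k ⟨hk, hjk⟩ => ⟨hk, ?_⟩
    by_contra h
    have := hN k (by omega)
    omega
  constructor
  · intro h
    calc i = (↑(Icc 1 i) : Set ℕ).ncard := by simp
      _ ≤ conjFn μ.part j := Set.ncard_le_ncard (fun k hk => by
          simp only [coe_Icc, Set.mem_Icc] at hk
          exact ⟨hk.1, h.trans (μ.antitone hk.1 hk.2)⟩) hfin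
  · intro h
    by_contra hlt
    have : conjFn μ.part j ≤ (↑(Icc 1 (i - 1)) : Set ℕ).ncard :=
      Set.ncard_le_ncard (fun k ⟨hk, hjk⟩ => by
        have : k < i := by
          by_contra h'
          have := μ.antitone hi (not_lt.1 h')
          omega
        simp only [coe_Icc, Set.mem_Icc]
        omega) (finite_toSet _)
    simp at this
    omega

lemma conjFn_le (hN : ∀ i, N ≤ i → μ.part i = 0) {j : ℕ} (hj : 1 ≤ j) :
    conjFn μ.part j ≤ N := by
  by_contra h
  have := (μ.le_part_iff_le_conjFn hN (i := N + 1) (by omega) hj).2 (by omega)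
  have := hN (N + 1) (by omega)
  omega

lemma conjFn_anti (hN : ∀ i, N ≤ i → μ.part i = 0) {j j' : ℕ} (hj : 1 ≤ j) (hjj' : j ≤ j') :
    conjFn μ.part j' ≤ conjFn μ.part j := by
  rcases Nat.eq_zero_or_pos (conjFn μ.part j') with h | h
  · omega
  · have := (μ.le_part_iff_le_conjFn hN h (by omega)).2 le_rfl
    exact (μ.le_part_iff_le_conjFn hN h hj).1 (by omega)

lemma beta_strictAntiOn : StrictAntiOn (beta N μ.part) ↑(Icc 1 N) := by
  intro i hi k hk hik
  simp only [coe_Icc, Set.mem_Icc] at hi hk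
  have := μ.antitone hi.1 hik.le
  simp only [beta]
  omega

lemma gap_strictMonoOn (hN : ∀ i, N ≤ i → μ.part i = 0) :
    StrictMonoOn (gap N μ.part) (Set.Ici 1) := by
  intro j hj j' _ hjj'
  have := μ.conjFn_anti hN hj hjj'.le
  have := μ.conjFn_le hN hj
  simp only [gap, Set.mem_Ici] at *
  omega

lemma gap_notMem_betaSet (hN : ∀ i, N ≤ i → μ.part i = 0) {j : ℕ} (hj : 1 ≤ j) :
    gap N μ.part j ∉ betaSet N μ.part := by
  simp only [betaSet, mem_image, mem_Icc, not_exists, not_and]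
  intro k hk
  have hiff := μ.le_part_iff_le_conjFn hN hk.1 hj
  have := μ.conjFn_le hN hj
  simp only [beta, gap]
  omega

lemma gap_lt_beta (hN : ∀ i, N ≤ i → μ.part i = 0) {i j : ℕ} (hi : i ∈ Icc 1 N)
    (hj : j ∈ Icc 1 (μ.part i)) : gap N μ.part j < beta N μ.part i := by
  rw [mem_Icc] at hi hj
  have := (μ.le_part_iff_le_conjFn hN hi.1 hj.1).1 hj.2
  have := μ.conjFn_le hN hj.1
  simp only [beta, gap]
  omega

lemma hookFn_eq_beta_sub_gap (hN : ∀ i, N ≤ i → μ.part i = 0) {i j : ℕ} (hi : i ∈ Icc 1 N)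
    (hj : j ∈ Icc 1 (μ.part i)) : hookFn μ.part i j = beta N μ.part i - gap N μ.part j := by
  rw [mem_Icc] at hi hj
  have := (μ.le_part_iff_le_conjFn hN hi.1 hj.1).1 hj.2
  have := μ.conjFn_le hN hj.1
  simp only [hookFn, beta, gap]
  omega

lemma range_beta_sdiff_betaSet (hN : ∀ i, N ≤ i → μ.part i = 0) {i : ℕ} (hi : i ∈ Icc 1 N) :
    range (beta N μ.part i) \ betaSet N μ.part = (Icc 1 (μ.part i)).image (gap N μ.part) := by
  have hsub : (Icc 1 (μ.part i)).image (gap N μ.part)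
      ⊆ range (beta N μ.part i) \ betaSet N μ.part := by
    simp only [subset_iff, mem_image, mem_sdiff, mem_range]
    rintro _ ⟨j, hj, rfl⟩
    exact ⟨μ.gap_lt_beta hN hi hj, μ.gap_notMem_betaSet hN (mem_Icc.1 hj).1⟩
  refine (eq_of_subset_of_card_le hsub ?_).symm
  have hlower : (Icc (i + 1) N).image (beta N μ.part) ⊆ betaSet N μ.part :=
    image_subset_image fun k hk => by simp only [mem_Icc] at hk ⊢; omega
  have hbelow : (Icc (i + 1) N).image (beta N μ.part) ⊆ range (beta N μ.part i) := by
    simp only [subset_iff, mem_image, mem_range]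
    rintro _ ⟨k, hk, rfl⟩
    rw [mem_Icc] at hi hk
    exact μ.beta_strictAntiOn (by simpa using hi) (by simp; omega) (by omega)
  rw [card_image_of_injOn ((μ.gap_strictMonoOn hN).injOn.mono fun j hj => by
    simp only [coe_Icc, Set.mem_Icc, Set.mem_Ici] at hj ⊢; exact hj.1)]
  calc #(range (beta N μ.part i) \ betaSet N μ.part)
      ≤ #(range (beta N μ.part i) \ (Icc (i + 1) N).image (beta N μ.part)) :=
        card_le_card (sdiff_subset_sdiff le_rfl hlower)
    _ = #(Icc 1 (μ.part i)) := by
        rw [card_sdiff_of_subset hbelow, card_image_of_injOn (μ.beta_strictAntiOn.injOn.mono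
          fun k hk => by simp only [coe_Icc, Set.mem_Icc] at hk ⊢; omega)]
        simp only [card_range, Nat.card_Icc, beta]
        rw [mem_Icc] at hi
        omega

lemma sum_neg_one_pow_hookFn_row (hN : ∀ i, N ≤ i → μ.part i = 0) {i : ℕ} (hi : i ∈ Icc 1 N) :
    ∑ j ∈ Icc 1 (μ.part i), (-1 : ℤ) ^ hookFn μ.part i j
      = ∑ c ∈ range (beta N μ.part i) \ betaSet N μ.part, (-1 : ℤ) ^ (beta N μ.part i + c) := by
  rw [μ.range_beta_sdiff_betaSet hN hi, sum_image fun j hj j' hj' h =>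
    (μ.gap_strictMonoOn hN).injOn (by simp_all) (by simp_all) h]
  refine sum_congr rfl fun j hj => ?_
  have := μ.gap_lt_beta hN hi hj
  rw [μ.hookFn_eq_beta_sub_gap hN hi hj]
  exact pow_eq_pow_of_modEq (by unfold Nat.ModEq; omega) neg_one_sq

lemma sum_neg_one_pow_betaSet (hNeven : Even N) :
    ∑ b ∈ betaSet N μ.part, (-1 : ℤ) ^ b = charge N μ.part := by
  rw [betaSet, sum_image μ.beta_strictAntiOn.injOn]
  refine sum_congr rfl fun i hi => pow_eq_pow_of_modEq ?_ neg_one_sq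
  obtain ⟨m, rfl⟩ := hNeven
  simp only [Nat.ModEq, beta, mem_Icc] at hi ⊢
  omega

theorem two_mul_finsum_neg_one_pow_hookFn (hNeven : Even N) (hN : ∀ i, N ≤ i → μ.part i = 0) :
    2 * ∑ᶠ p ∈ cellsFn μ.part, (-1 : ℤ) ^ hookFn μ.part p.1 p.2
      = charge N μ.part - charge N μ.part ^ 2 := by
  rw [μ.finsum_mem_cellsFn hN, ← μ.sum_neg_one_pow_betaSet hNeven,
    ← two_mul_sum_sum_range_sdiff_neg_one_pow, betaSet, sum_image μ.beta_strictAntiOn.injOn]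
  congr 1
  exact sum_congr rfl fun i hi => μ.sum_neg_one_pow_hookFn_row hN hi

theorem two_mul_checkerSum_cellsFn (hNeven : Even N) (hN : ∀ i, N ≤ i → μ.part i = 0) :
    2 * checkerSum (cellsFn μ.part) = charge N μ.part := by
  have hrow : ∀ i, 2 * ∑ j ∈ Icc 1 (μ.part i), (-1 : ℤ) ^ (i + j)
      = (-1) ^ (μ.part i + i) - (-1) ^ i := by
    intro i
    simp_rw [pow_add, ← mul_sum, mul_left_comm, two_mul_sum_Icc_neg_one_pow]
    ring
  rw [checkerSum, μ.finsum_mem_cellsFn hN, mul_sum]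
  simp_rw [hrow]
  rw [sum_sub_distrib, sum_Icc_neg_one_pow_of_even hNeven, sub_zero, charge]

def shortenRow (k v : ℕ) (hk : 1 ≤ k) (hnext : μ.part (k + 1) ≤ v) (hv : v ≤ μ.part k) :
    OneIdxPartition where
  part := Function.update μ.part k v
  part_zero := by rw [Function.update_of_ne (by omega), μ.part_zero]
  antitone i j hi hij := by
    simp only [Function.update_apply]
    split_ifs with hj hik hik
    · exact le_rfl
    · subst hj
      exact hv.trans (μ.antitone hi hij)
    · subst hik
      exact (μ.antitone (by omega) (by omega : i + 1 ≤ j)).trans hnext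
    · exact μ.antitone hi hij
  finite := by
    obtain ⟨N, hN⟩ := μ.finite
    refine ⟨max N (k + 1), fun i hi => ?_⟩
    rw [Function.update_of_ne (by omega)]
    exact hN i (by omega)

/-- `ν` is `μ` with one domino removed. -/
def RemovesDomino (ν : OneIdxPartition) : Prop :=
  ∃ d, IsDomino d ∧ Disjoint d (cellsFn ν.part) ∧ cellsFn μ.part = d ∪ cellsFn ν.part

variable {μ}

lemma RemovesDomino.hasDominoTiling {ν : OneIdxPartition} (h : μ.RemovesDomino ν)
    (hν : HasDominoTiling ν.part) : HasDominoTiling μ.part := by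
  obtain ⟨d, hd, hdisj, hcells⟩ := h
  obtain ⟨D, hD, hpd, hU⟩ := hν
  refine ⟨insert d D, ?_, hpd.insert fun e he _ => ?_, by rw [Set.sUnion_insert, hU, hcells]⟩
  · rintro e (rfl | he)
    exacts [hd, hD e he]
  · rw [← hU] at hdisj
    exact hdisj.mono_right (Set.subset_sUnion_of_mem he)

lemma RemovesDomino.ncard_lt {ν : OneIdxPartition} (h : μ.RemovesDomino ν) :
    (cellsFn ν.part).ncard < (cellsFn μ.part).ncard := by
  obtain ⟨d, hd, hdisj, hcells⟩ := h
  rw [hcells, Set.ncard_union_eq hdisj hd.finite ν.cellsFn_finite, hd.ncard_eq_two]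
  omega

lemma RemovesDomino.checkerSum_eq {ν : OneIdxPartition} (h : μ.RemovesDomino ν) :
    checkerSum (cellsFn μ.part) = checkerSum (cellsFn ν.part) := by
  obtain ⟨d, hd, hdisj, hcells⟩ := h
  rw [hcells, checkerSum, finsum_mem_union hdisj hd.finite ν.cellsFn_finite, ← checkerSum,
    hd.checkerSum_eq_zero, zero_add, checkerSum]

variable (μ)

lemma exists_removesDomino_of_horizontal {k : ℕ} (hk : 1 ≤ k)
    (h : μ.part (k + 1) + 2 ≤ μ.part k) : ∃ ν, μ.RemovesDomino ν := by
  refine ⟨μ.shortenRow k (μ.part k - 2) hk (by omega) (by omega), {(k, μ.part k - 1), (k, μ.part k)},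
    ⟨k, μ.part k - 1, Or.inl (by rw [Nat.sub_add_cancel (by omega)])⟩, ?_, ?_⟩
  · simp [Set.disjoint_left, cellsFn, shortenRow]
    omega
  · ext ⟨i, j⟩
    simp only [cellsFn, shortenRow, Function.update_apply, Set.mem_union, Set.mem_insert_iff,
      Set.mem_singleton_iff, Set.mem_ofPred_eq, Prod.mk.injEq]
    split_ifs with hi
    · subst hi; omega
    · omega

lemma exists_removesDomino_of_vertical {k : ℕ} (hk : 1 ≤ k)
    (heq : μ.part (k + 1) = μ.part k) (hlt : μ.part (k + 2) < μ.part k) :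
    ∃ ν, μ.RemovesDomino ν := by
  let μ₁ := μ.shortenRow (k + 1) (μ.part k - 1) (by omega) (by show μ.part (k + 2) ≤ _; omega)
    (by omega)
  refine ⟨μ₁.shortenRow k (μ.part k - 1) hk (by simp [μ₁, shortenRow])
      (by simp [μ₁, shortenRow]), {(k, μ.part k), (k + 1, μ.part k)}, ⟨k, μ.part k, Or.inr rfl⟩,
    ?_, ?_⟩
  · simp [Set.disjoint_left, cellsFn, shortenRow, μ₁, Function.update_apply]
    omega
  · ext ⟨i, j⟩
    simp only [cellsFn, shortenRow, μ₁, Function.update_apply, Set.mem_union, Set.mem_insert_iff,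
      Set.mem_singleton_iff, Set.mem_ofPred_eq, Prod.mk.injEq]
    split_ifs with hi hi'
    · subst hi; omega
    · subst hi'; omega
    · omega

/-- The hypotheses say that no domino of `μ` is removable: such a partition is a staircase. -/
lemma part_eq_staircase (hhor : ∀ k, 1 ≤ k → μ.part k < μ.part (k + 1) + 2)
    (hver : ∀ k, 1 ≤ k → μ.part (k + 1) = μ.part k → μ.part k ≤ μ.part (k + 2)) :
    ∀ i, 1 ≤ i → μ.part i = μ.part 1 + 1 - i := by
  have hstrict : ∀ k, 1 ≤ k → 0 < μ.part (k + 1) → μ.part (k + 1) < μ.part k := by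
    intro k hk hpos
    by_contra hge
    have heq : μ.part (k + 1) = μ.part k := le_antisymm (μ.antitone hk (by omega)) (by omega)
    -- two equal rows propagate forever, against the finiteness of `μ`
    have hconst : ∀ m, μ.part (k + m) = μ.part k ∧ μ.part (k + m + 1) = μ.part k := by
      intro m
      induction m with
      | zero => exact ⟨rfl, heq⟩
      | succ m ih =>
        show μ.part (k + m + 1) = μ.part k ∧ μ.part (k + m + 2) = μ.part k
        have := hver (k + m) (by omega) (by omega)
        have := μ.antitone (by omega : 1 ≤ k + m + 1) (by omega : k + m + 1 ≤ k + m + 2)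
        omega
    obtain ⟨N, hN⟩ := μ.finite
    have := (hconst N).1
    rw [hN (k + N) (by omega)] at this
    omega
  intro i hi
  induction i, hi using Nat.le_induction with
  | base => omega
  | succ i hi ih =>
    have := hhor i hi
    by_cases hpos : 0 < μ.part (i + 1)
    · have := hstrict i hi hpos
      omega
    · omega

lemma charge_ne_zero_of_staircase (hNeven : Even N) (hN : ∀ i, N ≤ i → μ.part i = 0)
    (hpos : 0 < μ.part 1) (hst : ∀ i, 1 ≤ i → μ.part i = μ.part 1 + 1 - i) :
    charge N μ.part ≠ 0 := by
  set r := μ.part 1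
  have hrN : r < N := by
    rcases Nat.eq_zero_or_pos N with hN0 | hNpos
    · have := hN 1 (by omega)
      omega
    · have := hst N hNpos
      have := hN N le_rfl
      omega
  have hsplit : ∀ g : ℕ → ℤ, ∑ i ∈ Icc 1 N, g i = ∑ i ∈ Icc 1 r, g i + ∑ i ∈ Ioc r N, g i :=
    fun g => (sum_Ioc_consecutive g (Nat.zero_le r) hrN.le).symm
  have hlow : ∑ i ∈ Icc 1 r, (-1 : ℤ) ^ (μ.part i + i) = r * (-1) ^ (r + 1) := by
    rw [sum_congr rfl fun i hi => by rw [hst i (mem_Icc.1 hi).1, Nat.sub_add_cancel (by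
      simp only [mem_Icc] at hi; omega)]]
    simp
  have hhigh : ∑ i ∈ Ioc r N, (-1 : ℤ) ^ (μ.part i + i) = ∑ i ∈ Ioc r N, (-1 : ℤ) ^ i :=
    sum_congr rfl fun i hi => by
      rw [hst i (by simp only [mem_Ioc] at hi; omega), show r + 1 - i = 0 by
        simp only [mem_Ioc] at hi; omega, zero_add]
  have heven := sum_Icc_neg_one_pow_of_even hNeven
  have hr := two_mul_sum_Icc_neg_one_pow r
  rw [hsplit] at heven
  rw [charge, hsplit, hlow, hhigh]
  rcases Nat.even_or_odd r with he | ho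
  · rw [he.neg_one_pow] at hr
    rw [(he.add_one).neg_one_pow]
    omega
  · rw [ho.neg_one_pow] at hr
    rw [(ho.add_one).neg_one_pow]
    omega

lemma exists_removesDomino (h : checkerSum (cellsFn μ.part) = 0) (hpos : 0 < μ.part 1) :
    ∃ ν, μ.RemovesDomino ν := by
  by_contra hrem
  obtain ⟨N, hNeven, hN⟩ := μ.exists_even_bound
  refine μ.charge_ne_zero_of_staircase hNeven hN hpos (μ.part_eq_staircase ?_ ?_) ?_
  · intro k hk
    by_contra hlt
    exact hrem (μ.exists_removesDomino_of_horizontal hk (by omega))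
  · intro k hk heq
    by_contra hlt
    exact hrem (μ.exists_removesDomino_of_vertical hk heq (by omega))
  · rw [← μ.two_mul_checkerSum_cellsFn hNeven hN, h, mul_zero]

theorem hasDominoTiling_of_checkerSum_eq_zero (h : checkerSum (cellsFn μ.part) = 0) :
    HasDominoTiling μ.part := by
  induction hM : (cellsFn μ.part).ncard using Nat.strong_induction_on generalizing μ with
  | _ M ih =>
  by_cases hpos : 0 < μ.part 1
  · obtain ⟨ν, hν⟩ := μ.exists_removesDomino h hpos
    exact hν.hasDominoTiling (ih _ (hM ▸ hν.ncard_lt) ν (hν.checkerSum_eq ▸ h) rfl)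
  · refine ⟨∅, by simp, Set.pairwiseDisjoint_empty, ?_⟩
    ext ⟨i, j⟩
    simp only [Set.sUnion_empty, Set.mem_empty_iff_false, cellsFn, Set.mem_ofPred_eq, false_iff]
    rintro ⟨hi, hj, hji⟩
    have := μ.antitone le_rfl hi
    omega

end OneIdxPartition

/-- a partition of `2n` can be tiled by dominoes iff it has exactly `n`
even and exactly `n` odd hook lengths (counted with multiplicity over the cells). -/
theorem littlewood_two_core_iff_hooks (n : ℕ) (μ : OneIdxPartition)
    (hsize : sizeFn μ.part = 2 * n) :
    HasDominoTiling μ.part ↔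
      Set.ncard {p : ℕ × ℕ | p ∈ cellsFn μ.part ∧ Even (hookFn μ.part p.1 p.2)} = n ∧
      Set.ncard {p : ℕ × ℕ | p ∈ cellsFn μ.part ∧ Odd (hookFn μ.part p.1 p.2)} = n := by
  obtain ⟨N, hNeven, hN⟩ := μ.exists_even_bound
  have hcount := ncard_sep_even_add_ncard_sep_odd μ.cellsFn_finite fun p => hookFn μ.part p.1 p.2
  rw [μ.ncard_cellsFn, hsize] at hcount
  have hhooks := μ.two_mul_finsum_neg_one_pow_hookFn hNeven hN
  rw [finsum_mem_neg_one_pow μ.cellsFn_finite fun p => hookFn μ.part p.1 p.2] at hhooks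
  have hchecker := μ.two_mul_checkerSum_cellsFn hNeven hN
  constructor
  · intro htiling
    rw [htiling.checkerSum_eq_zero μ.cellsFn_finite, mul_zero] at hchecker
    rw [← hchecker] at hhooks
    omega
  · rintro ⟨hE, hO⟩
    refine μ.hasDominoTiling_of_checkerSum_eq_zero ?_
    rw [hE, hO, sub_self, mul_zero, eq_comm] at hhooks
    have hs : charge N μ.part * (1 - charge N μ.part) = 0 := by linear_combination hhooks
    rcases mul_eq_zero.1 hs with hs | hs <;> omega
end

section
/- Let n be a positive integer and let λ be a partition with at most 2n parts whose Young diagram can be tiled by dominoes, padded with zeros so that λ_1, …, λ_{2n} are defined. Then b(λ') = |λ|/2 − n^2 − n + Σ_{1≤i<j≤2n} (−1)^{λ_i − λ_j + j − i}(λ_j − j). -/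
/-- A partition `λ`, 1-indexed: `λ_i = part i` for `i ≥ 1`. -/
structure OneIndexedPartition where
  part : ℕ → ℕ
  part_zero : part 0 = 0
  antitone : ∀ ⦃i j : ℕ⦄, 1 ≤ i → i ≤ j → part j ≤ part i
  finite : ∃ N : ℕ, ∀ i : ℕ, N ≤ i → part i = 0

/-!
Row `c` of `λ'` has length `k = λ'_c` exactly when `λ_{k+1} < c ≤ λ_k`, and since `λ'' = λ` the sign
of the cell `(c, j)` of `λ'` factors as `(-1)^(k+c+1) δ_j` with `δ_j = (-1)^(λ_j + j)`. Hence
`b(λ') = Σ_k A_k T_k` with partial sums `A_k = δ_1 + ⋯ + δ_k` and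
`T_k = Σ_{λ_{k+1} < c ≤ λ_k} (-1)^(k+c+1) (k - c)`, a sum that telescopes after multiplying by `4`.
Summation by parts turns `4 Σ_k A_k T_k` into the pair sum of the formula plus terms in `A_{2n}`,
and `A_{2n} = 0` because every domino covers one cell of each colour of the checkerboard `(-1)^(i+j)`.
-/

open Finset

lemma four_mul_sum_Ioc_neg_one_pow_mul (k a b : ℕ) (hab : a ≤ b) :
    4 * ∑ c ∈ Ioc a b, (-1 : ℤ) ^ (k + c + 1) * ((k : ℤ) - c) =
      (-1) ^ (b + k) * (2 * ((b : ℤ) - k) + 1) - (-1) ^ (a + k) * (2 * ((a : ℤ) - k) + 1) := by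
  induction b, hab using Nat.le_induction with
  | base => simp
  | succ b hab ih =>
    rw [sum_Ioc_succ_top hab, mul_add, ih]
    push_cast
    ring

lemma sum_Icc_two_mul_sub_one (K : ℕ) : ∑ k ∈ Icc 1 K, (2 * (k : ℤ) - 1) = (K : ℤ) ^ 2 := by
  induction K with
  | zero => simp
  | succ K ih =>
    rw [sum_Icc_succ_top (by omega), ih]
    push_cast
    ring

lemma sum_Ioc_eq_sum_Icc_sum_Ioc {β : Type*} [AddCommMonoid β] (a : ℕ → ℕ)
    (ha : ∀ ⦃i j : ℕ⦄, 1 ≤ i → i ≤ j → a j ≤ a i) (t : ℕ → β) (K : ℕ) :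
    ∑ c ∈ Ioc (a (K + 1)) (a 1), t c = ∑ k ∈ Icc 1 K, ∑ c ∈ Ioc (a (k + 1)) (a k), t c := by
  induction K with
  | zero => simp
  | succ K ih =>
    rw [sum_Icc_succ_top (by omega), ← ih,
      ← sum_Ioc_consecutive _ (ha (show 1 ≤ K + 1 by omega) (Nat.le_succ _))
        (ha le_rfl (show 1 ≤ K + 1 by omega)), add_comm]

lemma sum_Icc_sum_Ico_eq_sum_Icc_sum_Ioc {β : Type*} [AddCommMonoid β] (g : ℕ → ℕ → β)
    (K : ℕ) : ∑ k ∈ Icc 1 K, ∑ j ∈ Ico 1 k, g j k = ∑ i ∈ Icc 1 K, ∑ j ∈ Ioc i K, g i j :=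
  sum_comm' fun k j => by simp only [mem_Icc, mem_Ico, mem_Ioc]; omega

/-- Summation by parts against the partial sums of a `±1` sequence. -/
lemma sum_partialSum_mul_eq_of_sq_eq_one (δ u : ℕ → ℤ) (hδ : ∀ j, δ j ^ 2 = 1) (K : ℕ) :
    ∑ k ∈ Icc 1 K, (∑ j ∈ Icc 1 k, δ j) *
        (δ k * (2 * u k + 1) + δ (k + 1) * (2 * u (k + 1) + 3)) =
      ∑ k ∈ Icc 1 K, (2 * u k - 1) + 4 * ∑ k ∈ Icc 1 K, ∑ j ∈ Ico 1 k, δ j * δ k * u k +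
        2 * (∑ j ∈ Icc 1 K, δ j) ^ 2 +
          (∑ j ∈ Icc 1 K, δ j) * δ (K + 1) * (2 * u (K + 1) + 3) := by
  induction K with
  | zero => simp
  | succ K ih =>
    have hlast : ∑ j ∈ Ico 1 (K + 1), δ j * δ (K + 1) * u (K + 1) =
        (∑ j ∈ Icc 1 K, δ j) * δ (K + 1) * u (K + 1) := by
      rw [← sum_mul, ← sum_mul, Ico_add_one_right_eq_Icc]
    simp only [sum_Icc_succ_top (Nat.le_add_left 1 K)]
    rw [ih, hlast]
    linear_combination (2 * u (K + 1) - 1) * hδ (K + 1)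

lemma finsum_mem_cellsFn_neg_one_pow_eq_zero {f : ℕ → ℕ} (hfin : (cellsFn f).Finite)
    (ht : HasDominoTiling f) : ∑ᶠ p ∈ cellsFn f, (-1 : ℤ) ^ (p.1 + p.2) = 0 := by
  obtain ⟨D, hdom, hdisj, hD⟩ := ht
  have hsub : ∀ d ∈ D, d ⊆ cellsFn f := fun d hd => hD ▸ Set.subset_sUnion_of_mem hd
  rw [← hD, finsum_mem_sUnion hdisj (hfin.finite_subsets.subset hsub)
    fun d hd => hfin.subset (hsub d hd)]
  refine finsum_mem_eq_zero_of_forall_eq_zero fun d hd => ?_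
  obtain ⟨i, j, rfl | rfl⟩ := hdom d hd <;> rw [finsum_mem_pair (by simp)] <;> ring

-- `Set.ncard` of the infinite set `{i | 1 ≤ i}` is `0`.
lemma conjFn_zero (f : ℕ → ℕ) : conjFn f 0 = 0 := by
  show Set.ncard {i | 1 ≤ i ∧ 0 ≤ f i} = 0
  simp only [zero_le, and_true]
  exact (Set.Ici_infinite 1).ncard

namespace OneIndexedPartition

variable (μ : OneIndexedPartition)

lemma part_eq_zero_of_lt {K i : ℕ} (hK : μ.part (K + 1) = 0) (hi : K < i) : μ.part i = 0 :=
  Nat.eq_zero_of_le_zero (hK ▸ μ.antitone (by omega) hi)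

lemma le_conjFn_iff {c j : ℕ} (hc : 1 ≤ c) (hj : 1 ≤ j) :
    j ≤ conjFn μ.part c ↔ c ≤ μ.part j := by
  obtain ⟨N, hN⟩ := μ.finite
  have hfin : {i : ℕ | 1 ≤ i ∧ c ≤ μ.part i}.Finite :=
    (Set.finite_Iio N).subset fun i hi => by
      by_contra h
      have := hN i (not_lt.1 h)
      exact absurd hi.2 (by omega)
  rw [conjFn]
  constructor
  · intro h
    by_contra hlt
    have hsub : {i : ℕ | 1 ≤ i ∧ c ≤ μ.part i} ⊆ ↑(Icc 1 (j - 1)) := fun i ⟨hi, hci⟩ => by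
      have : i < j := by
        by_contra h'
        have := μ.antitone hj (not_lt.1 h')
        omega
      simp only [coe_Icc, Set.mem_Icc]
      omega
    have := Set.ncard_le_ncard hsub (finite_toSet _)
    rw [Set.ncard_coe_finset, Nat.card_Icc] at this
    omega
  · intro h
    have hsub : ↑(Icc 1 j) ⊆ {i : ℕ | 1 ≤ i ∧ c ≤ μ.part i} := fun i hi => by
      rw [coe_Icc, Set.mem_Icc] at hi
      exact ⟨hi.1, h.trans (μ.antitone hi.1 hi.2)⟩
    have := Set.ncard_le_ncard hsub hfin
    rwa [Set.ncard_coe_finset, Nat.card_Icc, Nat.add_sub_cancel] at this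

lemma conjFn_conjFn {j : ℕ} (hj : 1 ≤ j) : conjFn (conjFn μ.part) j = μ.part j := by
  have : {c : ℕ | 1 ≤ c ∧ j ≤ conjFn μ.part c} = ↑(Icc 1 (μ.part j)) := by
    ext c
    simp only [Set.mem_ofPred_eq, coe_Icc, Set.mem_Icc]
    exact and_congr_right fun hc => μ.le_conjFn_iff hc hj
  rw [conjFn, this, Set.ncard_coe_finset, Nat.card_Icc, Nat.add_sub_cancel]

lemma conjFn_eq_of_mem_Ioc {k c : ℕ} (hk : 1 ≤ k) (hc : c ∈ Ioc (μ.part (k + 1)) (μ.part k)) :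
    conjFn μ.part c = k := by
  rw [mem_Ioc] at hc
  have hc1 : 1 ≤ c := by omega
  have hle := (μ.le_conjFn_iff hc1 hk).2 hc.2
  have hlt : ¬ k + 1 ≤ conjFn μ.part c := fun h => by
    have := (μ.le_conjFn_iff hc1 (by omega)).1 h
    omega
  omega

lemma conjFn_eq_zero_of_notMem {c : ℕ} (hc : c ∉ Icc 1 (μ.part 1)) : conjFn μ.part c = 0 := by
  rcases Nat.eq_zero_or_pos c with rfl | hc1
  · exact conjFn_zero _
  · by_contra h
    have := (μ.le_conjFn_iff hc1 le_rfl).1 (Nat.one_le_iff_ne_zero.2 h)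
    exact hc (mem_Icc.2 ⟨hc1, this⟩)

lemma sizeFn_eq_sum_Icc {K : ℕ} (hK : μ.part (K + 1) = 0) :
    sizeFn μ.part = ∑ k ∈ Icc 1 K, μ.part k := by
  refine finsum_eq_sum_of_support_subset _ fun i hi => ?_
  rw [Function.mem_support] at hi
  have h1 : i ≠ 0 := by
    rintro rfl
    exact hi μ.part_zero
  have h2 : ¬ K < i := fun h => hi (μ.part_eq_zero_of_lt hK h)
  rw [coe_Icc, Set.mem_Icc]
  omega

lemma sum_Icc_two_mul_part_sub_sub_one {K : ℕ} (hK : μ.part (K + 1) = 0) :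
    ∑ k ∈ Icc 1 K, (2 * ((μ.part k : ℤ) - k) - 1) = 2 * sizeFn μ.part - K ^ 2 - 2 * K := by
  have hterm : ∀ k : ℕ, 2 * ((μ.part k : ℤ) - k) - 1 = 2 * μ.part k - (2 * k - 1) - 2 :=
    fun k => by ring
  rw [μ.sizeFn_eq_sum_Icc hK, sum_congr rfl fun k _ => hterm k, sum_sub_distrib,
    sum_sub_distrib, sum_Icc_two_mul_sub_one, ← mul_sum, sum_const, Nat.card_Icc]
  push_cast
  ring

lemma mem_cellsFn_iff {K : ℕ} (hK : μ.part (K + 1) = 0) (p : ℕ × ℕ) :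
    p ∈ cellsFn μ.part ↔ p.1 ∈ Icc 1 K ∧ p.2 ∈ Icc 1 (μ.part p.1) := by
  simp only [cellsFn, Set.mem_ofPred_eq, mem_Icc]
  constructor
  · rintro ⟨h1, h2, h3⟩
    have : ¬ K < p.1 := fun h => by
      rw [μ.part_eq_zero_of_lt hK h] at h3
      omega
    omega
  · rintro ⟨⟨h1, -⟩, h2, h3⟩
    exact ⟨h1, h2, h3⟩

lemma sum_neg_one_pow_part_add_eq_zero {K : ℕ} (hK : μ.part (K + 1) = 0) (hKeven : Even K)
    (ht : HasDominoTiling μ.part) : ∑ k ∈ Icc 1 K, (-1 : ℤ) ^ (μ.part k + k) = 0 := by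
  have hfin : (cellsFn μ.part).Finite :=
    ((Set.finite_Icc 1 K).prod (Set.finite_Icc 1 (μ.part 1))).subset fun p hp => by
      obtain ⟨h1, h2⟩ := (μ.mem_cellsFn_iff hK p).1 hp
      rw [mem_Icc] at h1 h2
      exact ⟨h1, h2.1, h2.2.trans (μ.antitone le_rfl h1.1)⟩
  have hcells := finsum_mem_cellsFn_neg_one_pow_eq_zero hfin ht
  rw [finsum_mem_eq_finite_toFinset_sum _ hfin, sum_finset_product _ (Icc 1 K)
    (fun i => Icc 1 (μ.part i)) fun p => by rw [Set.Finite.mem_toFinset, μ.mem_cellsFn_iff hK]]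
    at hcells
  have hrows : ∑ k ∈ Icc 1 K, (-1 : ℤ) ^ (μ.part k + k) =
      2 * ∑ i ∈ Icc 1 K, ∑ j ∈ Icc 1 (μ.part i), (-1 : ℤ) ^ (i + j) +
        ∑ k ∈ Icc 1 K, (-1 : ℤ) ^ k := by
    rw [mul_sum, ← sum_add_distrib]
    refine sum_congr rfl fun i _ => ?_
    simp only [pow_add (-1 : ℤ) i, ← mul_sum]
    rw [mul_left_comm, two_mul_sum_Icc_neg_one_pow]
    ring
  have halt := two_mul_sum_Icc_neg_one_pow K
  rw [hKeven.neg_one_pow] at halt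
  linarith

lemma bFn_conjFn_eq_sum {K : ℕ} (hK : μ.part (K + 1) = 0) :
    bFn (conjFn μ.part) = ∑ k ∈ Icc 1 K, (∑ j ∈ Icc 1 k, (-1 : ℤ) ^ (μ.part j + j)) *
      ∑ c ∈ Ioc (μ.part (k + 1)) (μ.part k), (-1 : ℤ) ^ (k + c + 1) * ((k : ℤ) - c) := by
  have hsupp : Function.support (fun c => ∑ j ∈ Icc 1 (conjFn μ.part c),
      (-1 : ℤ) ^ (conjFn μ.part c + conjFn (conjFn μ.part) j + c + j + 1) *
        ((conjFn μ.part c : ℤ) - c)) ⊆ ↑(Icc 1 (μ.part 1)) := fun c hc => by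
    by_contra h
    exact hc (by simp [μ.conjFn_eq_zero_of_notMem h])
  have hIcc : Icc 1 (μ.part 1) = Ioc (μ.part (K + 1)) (μ.part 1) := by
    rw [hK]
    exact Icc_add_one_left_eq_Ioc 0 _
  rw [bFn, finsum_eq_sum_of_support_subset _ hsupp, hIcc,
    sum_Ioc_eq_sum_Icc_sum_Ioc _ μ.antitone]
  refine sum_congr rfl fun k hk => ?_
  rw [mul_sum]
  refine sum_congr rfl fun c hc => ?_
  rw [μ.conjFn_eq_of_mem_Ioc (mem_Icc.1 hk).1 hc, sum_mul]
  refine sum_congr rfl fun j hj => ?_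
  rw [μ.conjFn_conjFn (mem_Icc.1 hj).1, show k + μ.part j + c + j + 1 = (k + c + 1) + (μ.part j + j)
    by ring, pow_add]
  ring

lemma four_mul_bFn_conjFn_eq_sum {K : ℕ} (hK : μ.part (K + 1) = 0) :
    4 * bFn (conjFn μ.part) = ∑ k ∈ Icc 1 K, (∑ j ∈ Icc 1 k, (-1 : ℤ) ^ (μ.part j + j)) *
      ((-1) ^ (μ.part k + k) * (2 * ((μ.part k : ℤ) - k) + 1) +
        (-1) ^ (μ.part (k + 1) + (k + 1)) * (2 * ((μ.part (k + 1) : ℤ) - (k + 1 : ℕ)) + 3)) := by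
  rw [μ.bFn_conjFn_eq_sum hK, mul_sum]
  refine sum_congr rfl fun k hk => ?_
  rw [mul_left_comm,
    four_mul_sum_Ioc_neg_one_pow_mul _ _ _ (μ.antitone (mem_Icc.1 hk).1 k.le_succ)]
  push_cast
  ring

end OneIndexedPartition

theorem b_conj_formula_general (n : ℕ) (μ : OneIndexedPartition)
    (hlen : μ.part (2 * n + 1) = 0) (ht : HasDominoTiling μ.part) :
    bFn (conjFn μ.part) =
      (sizeFn μ.part : ℤ) / 2 - (n : ℤ) ^ 2 - (n : ℤ) +
        ∑ i ∈ Finset.Icc 1 (2 * n), ∑ j ∈ Finset.Ioc i (2 * n),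
          (-1 : ℤ) ^ (μ.part i + μ.part j + i + j) * ((μ.part j : ℤ) - (j : ℤ)) := by
  have h4b := μ.four_mul_bFn_conjFn_eq_sum hlen
  rw [sum_partialSum_mul_eq_of_sq_eq_one (fun j => (-1 : ℤ) ^ (μ.part j + j))
      (fun j => (μ.part j : ℤ) - j) (fun j => by simp [← pow_mul]),
    μ.sum_neg_one_pow_part_add_eq_zero hlen (even_two_mul n) ht,
    μ.sum_Icc_two_mul_part_sub_sub_one hlen, sum_Icc_sum_Ico_eq_sum_Icc_sum_Ioc] at h4b
  simp only [← pow_add, show ∀ i j, μ.part i + i + (μ.part j + j) = μ.part i + μ.part j + i + j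
    from fun i j => by ring] at h4b
  set X := ∑ i ∈ Icc 1 (2 * n), ∑ j ∈ Ioc i (2 * n),
    (-1 : ℤ) ^ (μ.part i + μ.part j + i + j) * ((μ.part j : ℤ) - j)
  have hsize : (sizeFn μ.part : ℤ) = 2 * (bFn (conjFn μ.part) + n ^ 2 + n - X) := by
    push_cast at h4b
    linarith
  rw [hsize, Int.mul_ediv_cancel_left _ two_ne_zero]
  ring

/-- for `λ` with at most `2n` parts and empty 2-core,
`b(λ') = |λ|/2 − n² − n + Σ_{1≤i<j≤2n} (−1)^{λ_i−λ_j+j−i}(λ_j−j)`. -/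
theorem b_conj_formula (n : ℕ) (hn : 0 < n) (μ : OneIndexedPartition)
    (hlen : μ.part (2 * n + 1) = 0) (ht : HasDominoTiling μ.part) :
    bFn (conjFn μ.part) =
      (sizeFn μ.part : ℤ) / 2 - (n : ℤ) ^ 2 - (n : ℤ) +
        ∑ i ∈ Finset.Icc 1 (2 * n), ∑ j ∈ Finset.Ioc i (2 * n),
          (-1 : ℤ) ^ (μ.part i + μ.part j + i + j) * ((μ.part j : ℤ) - (j : ℤ)) :=
  b_conj_formula_general n μ hlen ht
end

section
/- Let n be a positive integer and let λ be a partition with at most 2n parts whose Young diagram can be tiled by dominoes, padded with zeros so that λ_1, …, λ_{2n} are defined. Then Σ_{i=1}^{2n} Σ_{j=1}^{λ_i+2n−i} (−1)^{λ_i − i − j + 1}(2n − j) + Σ_{1≤i<j≤2n} (−1)^{λ_i − λ_j + j − i} = |λ|/2 − n^2 − n. -/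
/-- A partition `λ`, 1-indexed: `λ_i = part i` for `i ≥ 1`. -/
structure YPartition where
  part : ℕ → ℕ
  part_zero : part 0 = 0
  antitone : ∀ ⦃i j : ℕ⦄, 1 ≤ i → i ≤ j → part j ≤ part i
  finite : ∃ N : ℕ, ∀ i : ℕ, N ≤ i → part i = 0

/-!
Put `x i = (-1) ^ (λ_i + i)`. In the checkerboard colouring every domino covers one cell
of each colour, so `∑_{(i,j) ∈ λ} (-1) ^ (i + j) = 0`, and expanding `(-1) ^ λ_i` as an
alternating sum along row `i` turns this into `∑_{i ≤ 2n} x i = 0`. The second sum is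
`∑_{i<j} x i x j = ((∑ x i)² - ∑ x i²) / 2 = -n`. The `i`-th row of the first sum is an
alternating sum with closed form `(2 m_i + (1 - x i)(1 - 4n)) / 4`, where `m_i = λ_i + 2n - i`;
summing over `i` with `∑ x i = 0` shows `|λ|` is even and the first sum is `|λ| / 2 - n²`.
-/

lemma IsDomino.finsum_mem_neg_one_pow_eq_zero {d : Set (ℕ × ℕ)} (hd : IsDomino d) :
    ∑ᶠ p ∈ d, (-1 : ℤ) ^ (p.1 + p.2) = 0 := by
  obtain ⟨i, j, rfl | rfl⟩ := hd
  · rw [finsum_mem_pair (by simp)]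
    simp only [← add_assoc, pow_succ]
    ring
  · rw [finsum_mem_pair (by simp), add_right_comm i 1 j, pow_succ]
    ring

lemma finsum_mem_sUnion_neg_one_pow_eq_zero {D : Set (Set (ℕ × ℕ))}
    (hD : ∀ d ∈ D, IsDomino d) (hdisj : D.PairwiseDisjoint id) (hfin : (⋃₀ D).Finite) :
    ∑ᶠ p ∈ ⋃₀ D, (-1 : ℤ) ^ (p.1 + p.2) = 0 := by
  have hsub (d : Set (ℕ × ℕ)) (hd : d ∈ D) : d ⊆ ⋃₀ D := Set.subset_sUnion_of_mem hd
  rw [finsum_mem_sUnion hdisj (hfin.finite_subsets.subset hsub) fun d hd => hfin.subset (hsub d hd)]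
  exact finsum_mem_eq_zero_of_forall_eq_zero fun d hd => (hD d hd).finsum_mem_neg_one_pow_eq_zero

lemma cellsFn_eq_coe_biUnion {f : ℕ → ℕ} {N : ℕ} (hf : ∀ i, N < i → f i = 0) :
    cellsFn f = ↑((Finset.Icc 1 N).biUnion fun i => {i} ×ˢ Finset.Icc 1 (f i)) := by
  ext ⟨i, j⟩
  simp only [cellsFn, Set.mem_ofPred_eq, Finset.coe_biUnion, Finset.coe_Icc, Set.mem_Icc,
    Set.mem_iUnion, Finset.coe_product, Finset.coe_singleton, Set.mem_prod, Set.mem_singleton_iff,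
    exists_prop]
  constructor
  · rintro ⟨hi, hj, hji⟩
    exact ⟨i, ⟨hi, not_lt.mp fun h => by simp [hf i h] at hji; omega⟩, rfl, hj, hji⟩
  · rintro ⟨i, ⟨hi, -⟩, rfl, hj, hji⟩
    exact ⟨hi, hj, hji⟩

theorem HasDominoTiling.sum_sum_neg_one_pow_eq_zero {f : ℕ → ℕ} (ht : HasDominoTiling f)
    {N : ℕ} (hf : ∀ i, N < i → f i = 0) :
    ∑ i ∈ Finset.Icc 1 N, ∑ j ∈ Finset.Icc 1 (f i), (-1 : ℤ) ^ (i + j) = 0 := by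
  obtain ⟨D, hD, hdisj, hcover⟩ := ht
  have hcells := cellsFn_eq_coe_biUnion hf
  have hsum := finsum_mem_sUnion_neg_one_pow_eq_zero hD hdisj
    (hcover ▸ hcells ▸ Finset.finite_toSet _)
  rw [hcover, hcells, finsum_mem_coe_finset] at hsum
  rw [← hsum, Finset.sum_finset_product _ (Finset.Icc 1 N) (fun i => Finset.Icc 1 (f i))
    fun ⟨i, j⟩ => by simp]

lemma neg_one_pow_eq_one_add_two_mul_sum (m : ℕ) :
    (-1 : ℤ) ^ m = 1 + 2 * ∑ j ∈ Finset.Icc 1 m, (-1 : ℤ) ^ j := by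
  induction m with
  | zero => simp
  | succ m ih =>
    rw [Finset.sum_Icc_succ_top (by omega), pow_succ]
    linear_combination ih

theorem HasDominoTiling.sum_neg_one_pow_add_eq_zero {f : ℕ → ℕ} (ht : HasDominoTiling f)
    {n : ℕ} (hf : ∀ i, 2 * n < i → f i = 0) :
    ∑ i ∈ Finset.Icc 1 (2 * n), (-1 : ℤ) ^ (f i + i) = 0 := by
  have hrow (i : ℕ) : (-1 : ℤ) ^ (f i + i)
      = (-1) ^ i + 2 * ∑ j ∈ Finset.Icc 1 (f i), (-1 : ℤ) ^ (i + j) := by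
    simp only [pow_add, ← Finset.mul_sum, neg_one_pow_eq_one_add_two_mul_sum (f i)]
    ring
  have halt : ∑ i ∈ Finset.Icc 1 (2 * n), (-1 : ℤ) ^ i = 0 := by
    have h := neg_one_pow_eq_one_add_two_mul_sum (2 * n)
    rw [Even.neg_one_pow ⟨n, two_mul n⟩] at h
    linarith
  rw [Finset.sum_congr rfl fun i _ => hrow i, Finset.sum_add_distrib, ← Finset.mul_sum, halt,
    ht.sum_sum_neg_one_pow_eq_zero hf]
  ring

lemma two_mul_sum_Icc_sum_Ioc_mul {R : Type*} [CommRing R] (x : ℕ → R) (m : ℕ) :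
    2 * ∑ i ∈ Finset.Icc 1 m, ∑ j ∈ Finset.Ioc i m, x i * x j
      = (∑ i ∈ Finset.Icc 1 m, x i) ^ 2 - ∑ i ∈ Finset.Icc 1 m, x i ^ 2 := by
  induction m with
  | zero => simp
  | succ m ih =>
    have hlast : ∀ i ∈ Finset.Icc 1 m, ∑ j ∈ Finset.Ioc i (m + 1), x i * x j
        = ∑ j ∈ Finset.Ioc i m, x i * x j + x i * x (m + 1) := fun i hi =>
      Finset.sum_Ioc_succ_top (Finset.mem_Icc.mp hi).2 _
    simp only [Finset.sum_Icc_succ_top (Nat.le_add_left 1 m), Finset.Ioc_self, Finset.sum_empty,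
      Finset.sum_congr rfl hlast, Finset.sum_add_distrib, ← Finset.sum_mul]
    linear_combination ih

lemma two_mul_sum_Icc_one_id (m : ℕ) : 2 * ∑ i ∈ Finset.Icc 1 m, (i : ℤ) = m * (m + 1) := by
  induction m with
  | zero => simp
  | succ m ih =>
    rw [Finset.sum_Icc_succ_top (by omega)]
    push_cast
    linear_combination ih

lemma four_mul_sum_neg_one_pow_mul_sub (N : ℤ) (m : ℕ) :
    4 * ∑ j ∈ Finset.Icc 1 m, (-1 : ℤ) ^ j * (N - j)
      = (1 - 2 * N) - (-1) ^ m * (2 * m + 1 - 2 * N) := by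
  induction m with
  | zero => simp
  | succ m ih =>
    rw [Finset.sum_Icc_succ_top (by omega), pow_succ]
    push_cast
    linear_combination ih

lemma four_mul_sum_neg_one_pow_add_mul_sub (N : ℤ) {c m : ℕ} (hcm : Even (c + m)) :
    4 * ∑ j ∈ Finset.Icc 1 m, (-1 : ℤ) ^ (c + j + 1) * (N - j)
      = 2 * m + (1 - (-1) ^ c) * (1 - 2 * N) := by
  have hsum : ∑ j ∈ Finset.Icc 1 m, (-1 : ℤ) ^ (c + j + 1) * (N - j)
      = -(-1) ^ c * ∑ j ∈ Finset.Icc 1 m, (-1 : ℤ) ^ j * (N - j) := by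
    rw [Finset.mul_sum]
    exact Finset.sum_congr rfl fun j _ => by ring
  have hpow : (-1 : ℤ) ^ c * (-1) ^ m = 1 := by rw [← pow_add, hcm.neg_one_pow]
  rw [hsum]
  linear_combination (-(-1 : ℤ) ^ c) * four_mul_sum_neg_one_pow_mul_sub N m +
    (2 * m + 1 - 2 * N) * hpow

namespace YPartition

lemma part_eq_zero_of_lt (μ : YPartition) {N : ℕ} (hN : μ.part (N + 1) = 0) {i : ℕ}
    (hi : N < i) : μ.part i = 0 :=
  Nat.eq_zero_of_le_zero (hN ▸ μ.antitone (Nat.le_add_left 1 N) hi)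

lemma sizeFn_eq_sum (μ : YPartition) {N : ℕ} (hN : μ.part (N + 1) = 0) :
    sizeFn μ.part = ∑ i ∈ Finset.Icc 1 N, μ.part i := by
  refine finsum_eq_sum_of_support_subset _ fun i hi => ?_
  rw [Function.mem_support] at hi
  have hi₀ : i ≠ 0 := by rintro rfl; exact hi μ.part_zero
  have hiN : i ≤ N := not_lt.mp fun h => hi (μ.part_eq_zero_of_lt hN h)
  simp only [Finset.coe_Icc, Set.mem_Icc]
  omega

end YPartition

theorem staircase_content_sum_general (n : ℕ) (μ : YPartition)
    (hlen : μ.part (2 * n + 1) = 0) (ht : HasDominoTiling μ.part) :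
    (∑ i ∈ Finset.Icc 1 (2 * n), ∑ j ∈ Finset.Icc 1 (μ.part i + 2 * n - i),
        (-1 : ℤ) ^ (μ.part i + i + j + 1) * ((2 * n : ℤ) - (j : ℤ)))
      + (∑ i ∈ Finset.Icc 1 (2 * n), ∑ j ∈ Finset.Ioc i (2 * n),
          (-1 : ℤ) ^ (μ.part i + μ.part j + i + j))
      = (sizeFn μ.part : ℤ) / 2 - (n : ℤ) ^ 2 - (n : ℤ) := by
  set I := Finset.Icc 1 (2 * n)
  set x : ℕ → ℤ := fun i => (-1) ^ (μ.part i + i)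
  set S1 := ∑ i ∈ I, ∑ j ∈ Finset.Icc 1 (μ.part i + 2 * n - i),
    (-1 : ℤ) ^ (μ.part i + i + j + 1) * ((2 * n : ℤ) - (j : ℤ))
  have hx : ∑ i ∈ I, x i = 0 :=
    ht.sum_neg_one_pow_add_eq_zero fun i => μ.part_eq_zero_of_lt hlen
  have hx_sq : ∑ i ∈ I, x i ^ 2 = 2 * n := by
    simp [x, ← pow_mul, I]
  have hrow (i : ℕ) (hi : i ∈ I) :
      4 * ∑ j ∈ Finset.Icc 1 (μ.part i + 2 * n - i),
          (-1 : ℤ) ^ (μ.part i + i + j + 1) * ((2 * n : ℤ) - (j : ℤ))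
        = 2 * (μ.part i + 2 * n - i : ℤ) + (1 - x i) * (1 - 4 * n) := by
    have hi2n : i ≤ 2 * n := (Finset.mem_Icc.mp hi).2
    rw [four_mul_sum_neg_one_pow_add_mul_sub _ ⟨μ.part i + n, by omega⟩]
    push_cast [hi2n.trans (Nat.le_add_left _ _)]
    ring
  have hS2 : 2 * ∑ i ∈ I, ∑ j ∈ Finset.Ioc i (2 * n),
      (-1 : ℤ) ^ (μ.part i + μ.part j + i + j) = 0 ^ 2 - 2 * n := by
    rw [← hx, ← hx_sq, ← two_mul_sum_Icc_sum_Ioc_mul]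
    refine congrArg _ (Finset.sum_congr rfl fun i _ => Finset.sum_congr rfl fun j _ => ?_)
    rw [← pow_add]
    ring_nf
  have hS1 : 4 * S1 = 2 * sizeFn μ.part - 4 * n ^ 2 := by
    rw [Finset.mul_sum, Finset.sum_congr rfl hrow, μ.sizeFn_eq_sum hlen]
    simp only [Finset.sum_add_distrib, Finset.sum_sub_distrib, ← Finset.mul_sum,
      ← Finset.sum_mul, Finset.sum_const, I, Nat.card_Icc]
    have hgauss := two_mul_sum_Icc_one_id (2 * n)
    push_cast [Nat.add_sub_cancel] at hgauss ⊢
    linear_combination (4 * n - 1) * hx - hgauss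
  have hsize : (sizeFn μ.part : ℤ) = 2 * (S1 + n ^ 2) := by linarith
  rw [hsize, Int.mul_ediv_cancel_left _ two_ne_zero]
  linarith

/-- for `λ` with at most `2n` parts and empty 2-core,
`Σ_{i=1}^{2n} Σ_{j=1}^{λ_i+2n−i} (−1)^{λ_i−i−j+1}(2n−j)
  + Σ_{1≤i<j≤2n} (−1)^{λ_i−λ_j+j−i} = |λ|/2 − n² − n`. -/
theorem staircase_content_sum (n : ℕ) (hn : 0 < n) (μ : YPartition)
    (hlen : μ.part (2 * n + 1) = 0) (ht : HasDominoTiling μ.part) :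
    (∑ i ∈ Finset.Icc 1 (2 * n), ∑ j ∈ Finset.Icc 1 (μ.part i + 2 * n - i),
        (-1 : ℤ) ^ (μ.part i + i + j + 1) * ((2 * n : ℤ) - (j : ℤ)))
      + (∑ i ∈ Finset.Icc 1 (2 * n), ∑ j ∈ Finset.Ioc i (2 * n),
          (-1 : ℤ) ^ (μ.part i + μ.part j + i + j))
      = (sizeFn μ.part : ℤ) / 2 - (n : ℤ) ^ 2 - (n : ℤ) :=
  staircase_content_sum_general n μ hlen ht
end

section
/- For every real number x with |x| < 1, the limit as q tends to 1 from below (q real, 0 < q < 1) of (q x^2; q^2)_∞/(x^2; q^2)_∞ equals (1 − x^2)^{−1/2}, where the positive square root is taken. -/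
/-- `(a;q)_∞ = ∏_{k≥0} (1 − a q^k)`, as an infinite product of real numbers. -/
noncomputable def qPochInf (a q : ℝ) : ℝ := ∏' k : ℕ, (1 - a * q ^ k)

/-!
Write `t = x²` and `r = q²`. Since `(1 - a s)² - (1 - a)(1 - a s²) = a (1 - s)²`, comparing factors gives
`(c; r)_∞ (c s²; r)_∞ ≤ (c s; r)_∞²` for `c ≥ 0`, and peeling off the first factor gives
`(c; r)_∞ = (1 - c) (c r; r)_∞`. With `(c, s) = (t, q)` and `(c, s) = (t / q, q)` these squeeze the
square of the ratio between `(1 - t)⁻¹` and `(1 - t / q)⁻¹`, and both bounds tend to `(1 - t)⁻¹`.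
-/

open Filter Topology

theorem tprod_le_tprod_of_nonneg {ι α : Type*} [CommSemiring α] [PartialOrder α]
    [IsOrderedRing α] [TopologicalSpace α] [OrderClosedTopology α] {f g : ι → α}
    (hf₀ : ∀ i, 0 ≤ f i) (hfg : ∀ i, f i ≤ g i) (hf : Multipliable f) (hg : Multipliable g) :
    ∏' i, f i ≤ ∏' i, g i :=
  le_of_tendsto_of_tendsto' hf.hasProd hg.hasProd fun _ ↦
    Finset.prod_le_prod (fun i _ ↦ hf₀ i) fun i _ ↦ hfg i

section qPochInf

variable {c r : ℝ}

theorem summable_log_one_sub_mul_pow (hr : |r| < 1) :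
    Summable fun k : ℕ ↦ Real.log (1 - c * r ^ k) := by
  simpa [sub_eq_add_neg] using
    Real.summable_log_one_add_of_summable ((summable_geometric_of_abs_lt_one hr).mul_left (-c))

theorem multipliable_one_sub_mul_pow (hr : |r| < 1) :
    Multipliable fun k : ℕ ↦ 1 - c * r ^ k := by
  simpa [sub_eq_add_neg] using
    Real.multipliable_one_add_of_summable ((summable_geometric_of_abs_lt_one hr).mul_left (-c))

theorem one_sub_mul_pow_pos (hc : |c| < 1) (hr : |r| < 1) (k : ℕ) : 0 < 1 - c * r ^ k := by
  have : |c * r ^ k| ≤ |c| := by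
    rw [abs_mul, abs_pow]
    exact mul_le_of_le_one_right (abs_nonneg c) (pow_le_one₀ (abs_nonneg r) hr.le)
  linarith [le_abs_self (c * r ^ k)]

theorem qPochInf_pos (hc : |c| < 1) (hr : |r| < 1) : 0 < qPochInf c r := by
  rw [qPochInf, ← Real.rexp_tsum_eq_tprod (one_sub_mul_pow_pos hc hr)
    (summable_log_one_sub_mul_pow hr)]
  exact Real.exp_pos _

theorem qPochInf_eq_one_sub_mul (hr : |r| < 1) : qPochInf c r = (1 - c) * qPochInf (c * r) r := by
  rw [qPochInf, tprod_eq_zero_mul', qPochInf]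
  · simp only [pow_zero, mul_one, pow_succ, mul_assoc, mul_comm r]
  · simpa only [pow_succ, mul_assoc, mul_comm r] using
      multipliable_one_sub_mul_pow (c := c * r) hr

theorem one_sub_mul_mul_one_sub_mul_le_sq {a s : ℝ} (ha : 0 ≤ a) :
    (1 - a) * (1 - a * s ^ 2) ≤ (1 - a * s) ^ 2 := by
  nlinarith [mul_nonneg ha (sq_nonneg (1 - s))]

theorem qPochInf_mul_qPochInf_le_sq {s : ℝ} (hc₀ : 0 ≤ c) (hc₁ : c ≤ 1) (hcs : c * s ^ 2 ≤ 1)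
    (hr₀ : 0 ≤ r) (hr₁ : r < 1) :
    qPochInf c r * qPochInf (c * s ^ 2) r ≤ qPochInf (c * s) r ^ 2 := by
  have hr : |r| < 1 := by rwa [abs_of_nonneg hr₀]
  have factor_nonneg {b : ℝ} (hb : b ≤ 1) (k : ℕ) : 0 ≤ 1 - b * r ^ k := by
    nlinarith [mul_nonneg (sub_nonneg.2 hb) (pow_nonneg hr₀ k), pow_le_one₀ hr₀ hr₁.le (n := k)]
  rw [qPochInf, qPochInf, qPochInf, ← (multipliable_one_sub_mul_pow hr).tprod_mul
    (multipliable_one_sub_mul_pow hr), ← (multipliable_one_sub_mul_pow hr).tprod_pow]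
  refine tprod_le_tprod_of_nonneg (fun k ↦ mul_nonneg (factor_nonneg hc₁ k) (factor_nonneg hcs k))
    (fun k ↦ ?_) ((multipliable_one_sub_mul_pow hr).mul (multipliable_one_sub_mul_pow hr))
    ((multipliable_one_sub_mul_pow hr).pow 2)
  simpa only [mul_right_comm c, mul_assoc] using
    one_sub_mul_mul_one_sub_mul_le_sq (a := c * r ^ k) (s := s) (by positivity)

end qPochInf

section ratio

variable {t q : ℝ}

theorem inv_one_sub_le_qPochInf_ratio_sq (ht₀ : 0 ≤ t) (ht₁ : t < 1) (hq : |q| < 1) :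
    (1 - t)⁻¹ ≤ (qPochInf (q * t) (q ^ 2) / qPochInf t (q ^ 2)) ^ 2 := by
  have hq₂ : q ^ 2 < 1 := (sq_lt_one_iff_abs_lt_one q).2 hq
  have hr : |q ^ 2| < 1 := by rwa [abs_of_nonneg (sq_nonneg q)]
  have hB := qPochInf_pos (by rwa [abs_of_nonneg ht₀]) hr
  have hshift := qPochInf_eq_one_sub_mul (c := t) hr
  have hconcave := qPochInf_mul_qPochInf_le_sq (s := q) ht₀ ht₁.le
    (by nlinarith) (sq_nonneg q) hq₂
  rw [mul_comm t q] at hconcave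
  rw [div_pow, le_div_iff₀ (by positivity), inv_mul_le_iff₀ (by linarith), hshift]
  rw [hshift] at hconcave
  nlinarith

theorem qPochInf_ratio_sq_le_inv_one_sub_div (ht₀ : 0 ≤ t) (htq : t < q) (hq : q < 1) :
    (qPochInf (q * t) (q ^ 2) / qPochInf t (q ^ 2)) ^ 2 ≤ (1 - t / q)⁻¹ := by
  have hq₀ : 0 < q := ht₀.trans_lt htq
  have hq₂ : q ^ 2 < 1 := by nlinarith
  have hr : |q ^ 2| < 1 := by rwa [abs_of_nonneg (sq_nonneg q)]
  have htq₁ : t / q < 1 := (div_lt_one hq₀).2 htq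
  have hB := qPochInf_pos (by rw [abs_of_nonneg ht₀]; linarith) hr
  have hshift := qPochInf_eq_one_sub_mul (c := t / q) hr
  have h1 : t / q * q ^ 2 = q * t := by field_simp
  have h2 : t / q * q = t := by field_simp
  have hconcave := qPochInf_mul_qPochInf_le_sq (s := q) (div_nonneg ht₀ hq₀.le) htq₁.le
    (by rw [h1]; nlinarith) (sq_nonneg q) hq₂
  rw [h1, h2, hshift, h1] at hconcave
  rw [div_pow, div_le_iff₀ (by positivity), le_inv_mul_iff₀ (by linarith)]
  nlinarith

theorem tendsto_qPochInf_ratio_sq (ht₀ : 0 ≤ t) (ht₁ : t < 1) :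
    Tendsto (fun q ↦ (qPochInf (q * t) (q ^ 2) / qPochInf t (q ^ 2)) ^ 2)
      (𝓝[Set.Ioo 0 1] 1) (𝓝 (1 - t)⁻¹) := by
  have hupper : Tendsto (fun q ↦ (1 - t / q)⁻¹) (𝓝[Set.Ioo 0 1] 1) (𝓝 (1 - t)⁻¹) := by
    have hcont : ContinuousAt (fun q ↦ (1 - t / q)⁻¹) 1 :=
      (continuousAt_const.sub (continuousAt_const.div continuousAt_id one_ne_zero)).inv₀
        (by simpa using (sub_pos.2 ht₁).ne')
    simpa using hcont.tendsto.mono_left nhdsWithin_le_nhds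
  refine tendsto_of_tendsto_of_tendsto_of_le_of_le' tendsto_const_nhds hupper ?_ ?_
  · filter_upwards [self_mem_nhdsWithin] with q ⟨hq₀, hq₁⟩
    exact inv_one_sub_le_qPochInf_ratio_sq ht₀ ht₁ (abs_lt.2 ⟨by linarith, hq₁⟩)
  · filter_upwards [(eventually_gt_nhds ht₁).filter_mono nhdsWithin_le_nhds, self_mem_nhdsWithin]
      with q htq ⟨_, hq₁⟩
    exact qPochInf_ratio_sq_le_inv_one_sub_div ht₀ htq hq₁

end ratio

/-- for real `x` with `|x| < 1`, as `q → 1⁻` (with `0 < q < 1`),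
`(q x²; q²)_∞ / (x²; q²)_∞ → (1 − x²)^{−1/2}` (positive square root). -/
theorem tendsto_qPoch_ratio (x : ℝ) (hx : |x| < 1) :
    Filter.Tendsto
      (fun q : ℝ => qPochInf (q * x ^ 2) (q ^ 2) / qPochInf (x ^ 2) (q ^ 2))
      (nhdsWithin 1 (Set.Ioo (0 : ℝ) 1))
      (nhds ((1 - x ^ 2) ^ (-(1 / 2) : ℝ))) := by
  have ht₀ : 0 ≤ x ^ 2 := sq_nonneg x
  have ht₁ : x ^ 2 < 1 := (sq_lt_one_iff_abs_lt_one x).2 hx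
  have htarget : (1 - x ^ 2) ^ (-(1 / 2) : ℝ) = √(1 - x ^ 2)⁻¹ := by
    rw [Real.rpow_neg (by linarith), ← Real.inv_rpow (by linarith), Real.sqrt_eq_rpow]
  rw [htarget]
  refine (tendsto_qPochInf_ratio_sq ht₀ ht₁).sqrt.congr' ?_
  filter_upwards [self_mem_nhdsWithin] with q ⟨hq₀, hq₁⟩
  have hr : |q ^ 2| < 1 := by
    rw [abs_of_nonneg (sq_nonneg q), sq_lt_one_iff₀ hq₀.le]; exact hq₁
  refine Real.sqrt_sq (div_pos (qPochInf_pos ?_ hr) (qPochInf_pos ?_ hr)).le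
  · rw [abs_of_nonneg (by positivity)]; nlinarith
  · rwa [abs_of_nonneg ht₀]
end

section
/- Let F be a field, let n be a positive integer, and let b, c, x_1, …, x_n, y_1, …, y_n be elements of F with x_i + y_j ≠ 0 for all 1 ≤ i, j ≤ n. Then det_{1≤i,j≤n} ((b x_i + c y_j)/(x_i + y_j)) = (b − c)^{n−1} · (b ∏_{i=1}^n x_i + (−1)^{n−1} c ∏_{i=1}^n y_i) · ∏_{1≤i<j≤n} (x_i − x_j)(y_i − y_j) / ∏_{i,j=1}^n (x_i + y_j). -/
/-!
Since `b x + c y = (b - c) x + c (x + y)`, the matrix is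
`(b - c) • X + c • J`, where `X i j = x i / (x i + y j)` and `J` is the all-ones matrix. The
determinant of `A + t • J` is affine in `t` (subtract one row from all the others), so it is
determined by its values at `t = 0` and `t = -1`; there `X` and `X - J = (-y j / (x i + y j))` are
rescalings of the Cauchy matrix `(x i + y j)⁻¹`. Cauchy's determinant follows by induction:
eliminating the first row and column, the Schur complement is again a rescaled Cauchy matrix.
-/

open Matrix Finset

theorem Fin.prod_prod_ite_lt_succ {M : Type*} [CommMonoid M] {n : ℕ}
    (f : Fin (n + 1) → Fin (n + 1) → M) :
    ∏ i, ∏ j, (if i < j then f i j else 1) =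
      (∏ j : Fin n, f 0 j.succ) *
        ∏ i : Fin n, ∏ j : Fin n, if i < j then f i.succ j.succ else 1 := by
  simp [Fin.prod_univ_succ, Fin.succ_pos]

namespace Matrix

variable {ι R K : Type*} [Fintype ι] [DecidableEq ι] [CommRing R] [Field K]

theorem det_add_const_eq_add_mul_det_updateRow (A : Matrix ι ι R) (i₀ : ι) (t : R) :
    det (of fun i j => A i j + t) =
      det A + t * det ((of fun i j => A i j - A i₀ j).updateRow i₀ 1) := by
  set B : Matrix ι ι R := of fun i j => A i j - A i₀ j
  have hrow : ∀ u : R,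
      det (of fun i j => A i j + u) = det (B.updateRow i₀ (A i₀ + u • 1)) := by
    intro u
    refine det_eq_of_forall_row_eq_smul_add_const (fun i => if i = i₀ then 0 else 1) i₀
      (if_pos rfl) fun i j => ?_
    by_cases hi : i = i₀
    · subst hi; simp
    · simp only [B, of_apply, updateRow_ne hi, updateRow_self, Pi.add_apply, Pi.smul_apply,
        Pi.one_apply, smul_eq_mul, mul_one, if_neg hi, one_mul]
      ring
  have h0 : det A = det (B.updateRow i₀ (A i₀)) := by
    have h0 := hrow 0
    simp only [add_zero, zero_smul] at h0
    exact h0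
  rw [hrow, det_updateRow_add, det_updateRow_smul, ← h0]

theorem det_add_const (A : Matrix ι ι R) (t : R) :
    det (of fun i j => A i j + t) = (1 + t) * det A - t * det (of fun i j => A i j - 1) := by
  cases isEmpty_or_nonempty ι with
  | inl _ => simp only [det_isEmpty]; ring
  | inr h =>
    obtain ⟨i₀⟩ := h
    simp only [sub_eq_add_neg, det_add_const_eq_add_mul_det_updateRow A i₀]
    ring

theorem det_mul_add_const {n : ℕ} (A : Matrix (Fin (n + 1)) (Fin (n + 1)) K) (s t : K) :
    det (of fun i j => s * A i j + t) =
      s ^ n * ((s + t) * det A - t * det (of fun i j => A i j - 1)) := by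
  rcases eq_or_ne s 0 with rfl | hs
  · simp only [zero_mul, zero_add]
    cases n with
    | zero => rw [det_fin_one, det_fin_one, det_fin_one]; simp only [of_apply]; ring
    | succ n =>
      rw [det_zero_of_row_eq (M := of fun _ _ => t) Fin.zero_ne_one rfl]
      ring
  · have hA : (of fun i j => s * A i j + t) = s • of fun i j => A i j + t / s := by
      ext i j; simp only [of_apply, smul_apply, smul_eq_mul]; field_simp
    rw [hA, det_smul, det_add_const, Fintype.card_fin]
    field_simp
    ring

theorem det_succ_eq_mul_det_schur {n : ℕ} (A : Matrix (Fin (n + 1)) (Fin (n + 1)) K)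
    (h : A 0 0 ≠ 0) :
    det A =
      A 0 0 * det (of fun i j : Fin n => A i.succ j.succ - A i.succ 0 / A 0 0 * A 0 j.succ) := by
  set B : Matrix (Fin (n + 1)) (Fin (n + 1)) K := of fun i j =>
    if i = 0 then A i j else A i j - A i 0 / A 0 0 * A 0 j
  have hB : det A = det B := by
    refine det_eq_of_forall_row_eq_smul_add_const (fun i => if i = 0 then 0 else A i 0 / A 0 0) 0
      (if_pos rfl) fun i j => ?_
    by_cases hi : i = 0
    · subst hi; simp [B]
    · simp [hi, B]
  rw [hB, det_succ_column_zero, Fin.sum_univ_succ]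
  simp [B, h, submatrix]

theorem det_cauchy_succ {n : ℕ} (x y : Fin (n + 1) → K) (h : ∀ i j, x i + y j ≠ 0) :
    det (of fun i j => (x i + y j)⁻¹) =
      (x 0 + y 0)⁻¹ * (∏ i : Fin n, (x 0 - x i.succ) / (x i.succ + y 0)) *
        (∏ j : Fin n, (y 0 - y j.succ) / (x 0 + y j.succ)) *
          det (of fun i j : Fin n => (x i.succ + y j.succ)⁻¹) := by
  set C : Matrix (Fin n) (Fin n) K := of fun i j => (x i.succ + y j.succ)⁻¹
  set u : Fin n → K := fun i => (x 0 - x i.succ) / (x i.succ + y 0)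
  set v : Fin n → K := fun j => (y 0 - y j.succ) / (x 0 + y j.succ)
  have hschur : (of fun i j : Fin n => (x i.succ + y j.succ)⁻¹ -
      (x i.succ + y 0)⁻¹ / (x 0 + y 0)⁻¹ * (x 0 + y j.succ)⁻¹) =
      of fun i j => u i * (of fun i j => v j * C i j) i j := by
    ext i j
    have := h i.succ j.succ; have := h i.succ 0; have := h 0 j.succ
    simp only [of_apply, u, v, C]
    field_simp
    ring
  rw [det_succ_eq_mul_det_schur _ (inv_ne_zero (h 0 0))]
  simp only [of_apply]
  rw [hschur, det_mul_column, det_mul_row]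
  ring

theorem det_cauchy {n : ℕ} (x y : Fin n → K) (h : ∀ i j, x i + y j ≠ 0) :
    det (of fun i j => (x i + y j)⁻¹) =
      (∏ i, ∏ j, if i < j then (x i - x j) * (y i - y j) else 1) /
        ∏ i, ∏ j, (x i + y j) := by
  induction n with
  | zero => simp
  | succ n ih =>
    rw [det_cauchy_succ x y h, ih _ _ fun i j => h i.succ j.succ, Fin.prod_prod_ite_lt_succ]
    simp only [Fin.prod_univ_succ, prod_mul_distrib, prod_div_distrib]
    have h₁ : ∀ i, ∏ j : Fin n, (x i + y j.succ) ≠ 0 := fun i =>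
      prod_ne_zero_iff.2 fun j _ => h _ _
    have h₂ : ∏ i : Fin n, ∏ j : Fin n, (x i.succ + y j.succ) ≠ 0 :=
      prod_ne_zero_iff.2 fun i _ => h₁ _
    field_simp

end Matrix

/-- a generalisation of Cauchy's double alternant:
`det((b x_i + c y_j)/(x_i + y_j))
  = (b−c)^{n−1} (b ∏ x_i + (−1)^{n−1} c ∏ y_i) ∏_{i<j}(x_i−x_j)(y_i−y_j) / ∏_{i,j}(x_i+y_j)`. -/
theorem cauchy_double_alternant_generalisation (F : Type*) [Field F] (n : ℕ) (hn : 0 < n)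
    (b c : F) (x y : Fin n → F) (h : ∀ i j : Fin n, x i + y j ≠ 0) :
    Matrix.det (Matrix.of fun i j : Fin n => (b * x i + c * y j) / (x i + y j)) =
      (b - c) ^ (n - 1) *
        (b * ∏ i : Fin n, x i + (-1 : F) ^ (n - 1) * c * ∏ i : Fin n, y i) *
        (∏ i : Fin n, ∏ j : Fin n, if i < j then (x i - x j) * (y i - y j) else 1) /
        ∏ i : Fin n, ∏ j : Fin n, (x i + y j) := by
  obtain ⟨m, rfl⟩ := Nat.exists_eq_add_one_of_ne_zero hn.ne'
  set C : Matrix (Fin (m + 1)) (Fin (m + 1)) F := of fun i j => (x i + y j)⁻¹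
  set X : Matrix (Fin (m + 1)) (Fin (m + 1)) F := of fun i j => x i * C i j
  have hM : (of fun i j => (b * x i + c * y j) / (x i + y j)) =
      of fun i j => (b - c) * X i j + c := by
    ext i j
    have := h i j
    simp only [of_apply, X, C]
    field_simp
    ring
  have hX : (of fun i j => X i j - 1) = of fun i j => -y j * C i j := by
    ext i j
    have := h i j
    simp only [of_apply, X, C]
    field_simp
    ring
  rw [hM, det_mul_add_const, hX, det_mul_column, det_mul_row, det_cauchy x y h, prod_neg,
    card_univ, Fintype.card_fin, Nat.add_sub_cancel]
  ring
end
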